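/- Let A₁A₂B₁B₂ and A₁'A₂'B₁B₂ be two ultraparallel hyperbolic trapezoids over the same lower edge B₁B₂, with lateral heights related by tanh h₁' = e^{-t}·tanh h₁ and tanh h₂' = e^{-t}·tanh h₂ for some t > 0. Let h₀ denote the distance between the lines A₁A₂ and B₁B₂, and suppose h₀ ≥ m and h₁, h₂ ≤ M for fixed constants 0 < m < M. Then as t → 0, the ratio of upper edge lengths l₁₂/l₁₂' converges to 1 uniformly over all such pairs of trapezoids; moreover when the trapezoid degenerates (lower edge length a₁₂ → 0), the ratio l₁₂/l₁₂' extends continuously with limit cosh²h₁ · cosh h₀' / (cosh²h₁' · cosh h₀). -/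

import Mathlib

open Real

/-! Hyperboloid model of the hyperbolic plane `H²` of curvature `-1`:
points are `p : ℝ × ℝ × ℝ` with `mink p p = 1` and `p.1 > 0`, where `mink` is the
Minkowski bilinear form of signature `(+,-,-)`.  Distances satisfy
`cosh (hdist p q) = mink p q` and angles are computed by the hyperbolic cosine law. -/

/-- Minkowski bilinear form on `ℝ^{1,2}`. -/
def mink (p q : ℝ × ℝ × ℝ) : ℝ := p.1 * q.1 - p.2.1 * q.2.1 - p.2.2 * q.2.2

/-- Inverse hyperbolic cosine. -/
noncomputable def arcosh (x : ℝ) : ℝ := Real.log (x + Real.sqrt (x ^ 2 - 1))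

/-- Hyperbolic distance between points of the hyperboloid. -/
noncomputable def hdist (p q : ℝ × ℝ × ℝ) : ℝ := _root_.arcosh (mink p q)

/-- Angle at `p` between the geodesic segments from `p` to `q` and from `p` to `r`. -/
noncomputable def hangle (p q r : ℝ × ℝ × ℝ) : ℝ :=
  Real.arccos ((mink p q * mink p r - mink q r) /
    (Real.sqrt (mink p q ^ 2 - 1) * Real.sqrt (mink p r ^ 2 - 1)))

/-- The point at signed arclength `s` along the base geodesic line `{x₂ = 0}` (the "lower
line"), moved to (signed) height `h` along the perpendicular at that point. -/
noncomputable def Pt (s h : ℝ) : ℝ × ℝ × ℝ :=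
  (Real.cosh s * Real.cosh h, Real.sinh s * Real.cosh h, Real.sinh h)

/-- Inverse hyperbolic tangent. -/
noncomputable def artanh (x : ℝ) : ℝ := Real.log ((1 + x) / (1 - x)) / 2

/-- The point at arclength `σ` along the upper line, which is ultraparallel to the base
line `{x₂ = 0}` at distance `h₀` (the common perpendicular meeting it at `σ = 0`). -/
noncomputable def U (h₀ σ : ℝ) : ℝ × ℝ × ℝ :=
  (Real.cosh σ * Real.cosh h₀, Real.sinh σ, Real.cosh σ * Real.sinh h₀)

/-- The height (distance to the base line) of the point `U h₀ σ`. -/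
noncomputable def htOf (h₀ σ : ℝ) : ℝ := Real.arsinh (Real.cosh σ * Real.sinh h₀)

/-- The base-line arclength of the foot of the perpendicular from `U h₀ σ`. -/
noncomputable def ftOf (h₀ σ : ℝ) : ℝ :=
  Real.arsinh (Real.sinh σ / Real.cosh (htOf h₀ σ))

/-- The hyperbolic homothety towards the base line: heights transform by
`tanh h ↦ e^{-t} tanh h`. -/
noncomputable def shrink (t h : ℝ) : ℝ := _root_.artanh (Real.exp (-t) * Real.tanh h)

/-- The upper edge length `l₁₂'` of the primed trapezoid `A₁'A₂'B₁B₂`, whose upper vertices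
`Aᵢ' ` lie over the same feet as `Aᵢ = U h₀ σᵢ` at heights `hᵢ'` with
`tanh hᵢ' = e^{-t} tanh hᵢ`.  (The upper edge length of the unprimed trapezoid is
`l₁₂ = |σ₁ - σ₂|`.) -/
noncomputable def lPrime (t h₀ σ₁ σ₂ : ℝ) : ℝ :=
  hdist (Pt (ftOf h₀ σ₁) (shrink t (htOf h₀ σ₁))) (Pt (ftOf h₀ σ₂) (shrink t (htOf h₀ σ₂)))

/-- The ratio `rat = l₁₂ / l₁₂'` of the upper edge lengths. -/
noncomputable def rat (t h₀ σ₁ σ₂ : ℝ) : ℝ := |σ₁ - σ₂| / lPrime t h₀ σ₁ σ₂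

/-! The homothety `tanh h ↦ e^{-t} tanh h` fixes the feet of perpendiculars to the lower line.
In Fermi coordinates `(s, h)` the upper line is `tanh h = cosh s · tanh h₀`, so the homothety maps
it onto the ultraparallel line at distance `h₀'`, `tanh h₀' = e^{-t} tanh h₀`, reparametrising
arclength by `φ = shrinkParam t h₀` with `tanh φ = tanh σ · cosh h₀' / cosh h₀`. Hence
`l₁₂' = |φ σ₁ - φ σ₂|`. With `S = stretch t`, `S(h) = cosh h / cosh h'`, so that
`S(h)² = 1 + (1 - e^{-2t}) sinh² h`, one computes `1 / φ'(σ) = S(h_σ)² / S(h₀) = localRat t h₀ σ`,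
where `h_σ ≥ h₀` is the height of the point `σ`. By the mean value theorem `l₁₂ / l₁₂'` is this
quantity at an intermediate point, hence lies in `[1, 1 + 2t sinh² M]`; as `σ₂ → σ₁` it tends to its value at `σ₁`, which is the stated limit. -/

open Set Filter Topology

namespace Real

theorem hasDerivAt_tanh (x : ℝ) : HasDerivAt tanh (cosh x ^ 2)⁻¹ x := by
  have h := (hasDerivAt_sinh x).div (hasDerivAt_cosh x) (cosh_pos x).ne'
  rw [← sq, ← sq, cosh_sq_sub_sinh_sq, one_div] at h
  exact h.congr_of_eventuallyEq (.of_forall fun y => tanh_eq_sinh_div_cosh y)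

theorem continuousAt_artanh {x : ℝ} (hx : x ∈ Ioo (-1) 1) : ContinuousAt artanh x := by
  have h1 : 0 < 1 - x := by linarith [hx.2]
  have h2 : 0 < (1 + x) / (1 - x) := div_pos (by linarith [hx.1]) h1
  unfold artanh
  exact (continuousAt_const.add continuousAt_id).div (continuousAt_const.sub continuousAt_id)
    h1.ne' |>.sqrt |>.log (sqrt_pos.2 h2).ne'

theorem hasDerivAt_artanh {x : ℝ} (hx : x ∈ Ioo (-1) 1) :
    HasDerivAt artanh (1 - x ^ 2)⁻¹ x := by
  have hpos : 0 < 1 - x ^ 2 := by nlinarith [hx.1, hx.2]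
  have hc : cosh (artanh x) ^ 2 = (1 - x ^ 2)⁻¹ := by
    rw [cosh_artanh hx, div_pow, sq_sqrt hpos.le, one_pow, one_div]
  have h := (hasDerivAt_tanh (artanh x)).of_local_left_inverse (continuousAt_artanh hx)
    (by rw [hc, inv_inv]; exact hpos.ne')
    (eventually_of_mem (Ioo_mem_nhds hx.1 hx.2) fun y hy => tanh_artanh hy)
  rwa [hc, inv_inv] at h

end Real

lemma arcosh_cosh_eq_abs (x : ℝ) : _root_.arcosh (cosh x) = |x| := by
  rw [← cosh_abs]
  -- `_root_.arcosh` has the same body as `Real.arcosh`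
  exact Real.arcosh_cosh (abs_nonneg x)

lemma artanh_eq_real_artanh {x : ℝ} (hx : x ∈ Ioo (-1) 1) :
    _root_.artanh x = Real.artanh x := by
  rw [Real.artanh_eq_half_log (Ioo_subset_Icc_self hx), _root_.artanh]
  ring

lemma mink_U_U (h₀ σ σ' : ℝ) : mink (U h₀ σ) (U h₀ σ') = cosh (σ - σ') := by
  simp only [mink, U, cosh_sub]
  linear_combination cosh σ * cosh σ' * cosh_sq_sub_sinh_sq h₀

lemma hdist_U_U (h₀ σ σ' : ℝ) : hdist (U h₀ σ) (U h₀ σ') = |σ - σ'| := by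
  rw [hdist, mink_U_U, arcosh_cosh_eq_abs]

lemma sinh_htOf (h₀ σ : ℝ) : sinh (htOf h₀ σ) = cosh σ * sinh h₀ := sinh_arsinh _

lemma Pt_ftOf_htOf (h₀ σ : ℝ) : Pt (ftOf h₀ σ) (htOf h₀ σ) = U h₀ σ := by
  have hc := cosh_pos (htOf h₀ σ)
  have hcosh : cosh (ftOf h₀ σ) * cosh (htOf h₀ σ) = cosh σ * cosh h₀ := by
    rw [← sq_eq_sq₀ (by positivity) (by positivity), mul_pow, ftOf, cosh_arsinh,
      sq_sqrt (by positivity)]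
    field_simp
    have e := cosh_sq_sub_sinh_sq (htOf h₀ σ)
    rw [sinh_htOf] at e
    linear_combination e - cosh_sq_sub_sinh_sq σ - cosh σ ^ 2 * cosh_sq_sub_sinh_sq h₀
  have hsinh : sinh (ftOf h₀ σ) * cosh (htOf h₀ σ) = sinh σ := by
    rw [ftOf, sinh_arsinh, div_mul_cancel₀ _ hc.ne']
  simp only [Pt, U, hcosh, hsinh, sinh_htOf]

lemma htOf_nonneg {h₀ : ℝ} (hh₀ : 0 ≤ h₀) (σ : ℝ) : 0 ≤ htOf h₀ σ :=
  arsinh_nonneg_iff.2 (mul_nonneg (cosh_pos σ).le (sinh_nonneg_iff.2 hh₀))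

lemma htOf_le_htOf {h₀ σ σ' : ℝ} (hh₀ : 0 ≤ h₀) (h : |σ| ≤ |σ'|) :
    htOf h₀ σ ≤ htOf h₀ σ' :=
  arsinh_le_arsinh.2 (mul_le_mul_of_nonneg_right (cosh_le_cosh.2 h) (sinh_nonneg_iff.2 hh₀))

lemma htOf_le_max_of_mem_uIcc {h₀ a b c : ℝ} (hh₀ : 0 ≤ h₀) (hc : c ∈ uIcc a b) :
    htOf h₀ c ≤ max (htOf h₀ a) (htOf h₀ b) := by
  have habs : |c| ≤ max |a| |b| := by
    rcases mem_uIcc.1 hc with h | h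
    · exact abs_le_max_abs_abs h.1 h.2
    · exact (abs_le_max_abs_abs h.1 h.2).trans_eq (max_comm _ _)
  rcases le_max_iff.1 habs with h | h
  · exact (htOf_le_htOf hh₀ h).trans (le_max_left _ _)
  · exact (htOf_le_htOf hh₀ h).trans (le_max_right _ _)

section Homothety

variable {t : ℝ}

lemma one_sub_exp_neg_sq_nonneg (ht : 0 ≤ t) : 0 ≤ 1 - exp (-t) ^ 2 := by
  have := exp_le_one_iff.2 (neg_nonpos.2 ht)
  nlinarith [exp_pos (-t)]

lemma one_sub_exp_neg_sq_le : 1 - exp (-t) ^ 2 ≤ 2 * t := by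
  have := add_one_le_exp (-(2 * t))
  rw [show -(2 * t) = -t + -t by ring, exp_add, ← sq] at this
  linarith

lemma exp_neg_mul_tanh_mem_Ioo (ht : 0 ≤ t) (h : ℝ) : exp (-t) * tanh h ∈ Ioo (-1) 1 := by
  rw [mem_Ioo, ← abs_lt, abs_mul, abs_of_pos (exp_pos _)]
  exact (mul_le_of_le_one_left (abs_nonneg _) (exp_le_one_iff.2 (neg_nonpos.2 ht))).trans_lt
    (abs_tanh_lt_one h)

lemma tanh_shrink (ht : 0 ≤ t) (h : ℝ) : tanh (shrink t h) = exp (-t) * tanh h := by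
  rw [shrink, artanh_eq_real_artanh (exp_neg_mul_tanh_mem_Ioo ht h),
    tanh_artanh (exp_neg_mul_tanh_mem_Ioo ht h)]

/-- On the hyperboloid the homothety `Pt s h ↦ Pt s (shrink t h)` is
`(x₀, x₁, x₂) ↦ (x₀, x₁, e^{-t} x₂) / stretch t h` (see `cosh_shrink`, `sinh_shrink`): a projective
map, which is why it sends lines to lines. -/
noncomputable def stretch (t h : ℝ) : ℝ := cosh h / cosh (shrink t h)

lemma stretch_pos (t h : ℝ) : 0 < stretch t h := div_pos (cosh_pos h) (cosh_pos _)

lemma stretch_sq (ht : 0 ≤ t) (h : ℝ) :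
    stretch t h ^ 2 = 1 + (1 - exp (-t) ^ 2) * sinh h ^ 2 := by
  have hI := exp_neg_mul_tanh_mem_Ioo ht h
  have h1 : 0 < 1 - (exp (-t) * tanh h) ^ 2 := by
    rw [sub_pos, sq_lt_one_iff_abs_lt_one, abs_lt]; exact hI
  rw [stretch, shrink, artanh_eq_real_artanh hI, cosh_artanh hI, div_div_eq_mul_div, div_one,
    mul_pow, sq_sqrt h1.le, tanh_eq_sinh_div_cosh]
  field_simp
  linear_combination cosh_sq_sub_sinh_sq h

lemma one_le_stretch (ht : 0 ≤ t) (h : ℝ) : 1 ≤ stretch t h := by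
  have := stretch_sq ht h
  nlinarith [stretch_pos t h, mul_nonneg (one_sub_exp_neg_sq_nonneg ht) (sq_nonneg (sinh h))]

lemma cosh_shrink (t h : ℝ) : cosh (shrink t h) = cosh h / stretch t h := by
  rw [stretch, div_div_cancel₀ (cosh_pos h).ne']

lemma sinh_shrink (ht : 0 ≤ t) (h : ℝ) :
    sinh (shrink t h) = exp (-t) * sinh h / stretch t h := by
  have := tanh_shrink ht h
  rw [tanh_eq_sinh_div_cosh, tanh_eq_sinh_div_cosh, cosh_shrink,
    div_eq_iff (div_pos (cosh_pos h) (stretch_pos t h)).ne'] at this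
  rw [this]
  field_simp

lemma stretch_le_stretch_htOf (ht : 0 ≤ t) (h₀ σ : ℝ) :
    stretch t h₀ ≤ stretch t (htOf h₀ σ) := by
  rw [← pow_le_pow_iff_left₀ (stretch_pos t h₀).le (stretch_pos t _).le two_ne_zero,
    stretch_sq ht, stretch_sq ht, sinh_htOf]
  have := one_sub_exp_neg_sq_nonneg ht
  gcongr 1 + _ * ?_
  rw [mul_pow]
  exact le_mul_of_one_le_left (sq_nonneg _) (one_le_pow₀ (one_le_cosh σ))

noncomputable def shrinkParam (t h₀ σ : ℝ) : ℝ := Real.artanh (tanh σ / stretch t h₀)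

lemma tanh_div_stretch_mem_Ioo (ht : 0 ≤ t) (h₀ σ : ℝ) :
    tanh σ / stretch t h₀ ∈ Ioo (-1) 1 := by
  rw [mem_Ioo, ← abs_lt, abs_div, abs_of_pos (stretch_pos t h₀), div_lt_one (stretch_pos t h₀)]
  exact (abs_tanh_lt_one σ).trans_le (one_le_stretch ht h₀)

lemma one_sub_sq_tanh_div_stretch (ht : 0 ≤ t) (h₀ σ : ℝ) :
    1 - (tanh σ / stretch t h₀) ^ 2 = (stretch t (htOf h₀ σ) / (stretch t h₀ * cosh σ)) ^ 2 := by
  have := stretch_pos t h₀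
  rw [tanh_eq_sinh_div_cosh]
  field_simp
  rw [stretch_sq ht, stretch_sq ht, sinh_htOf]
  linear_combination cosh_sq_sub_sinh_sq σ

lemma sqrt_one_sub_sq_tanh_div_stretch (ht : 0 ≤ t) (h₀ σ : ℝ) :
    √(1 - (tanh σ / stretch t h₀) ^ 2) = stretch t (htOf h₀ σ) / (stretch t h₀ * cosh σ) := by
  rw [one_sub_sq_tanh_div_stretch ht, sqrt_sq]
  exact (div_pos (stretch_pos t _) (mul_pos (stretch_pos t h₀) (cosh_pos σ))).le

lemma cosh_shrinkParam (ht : 0 ≤ t) (h₀ σ : ℝ) :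
    cosh (shrinkParam t h₀ σ) = stretch t h₀ * cosh σ / stretch t (htOf h₀ σ) := by
  rw [shrinkParam, cosh_artanh (tanh_div_stretch_mem_Ioo ht h₀ σ),
    sqrt_one_sub_sq_tanh_div_stretch ht, one_div_div]

lemma sinh_shrinkParam (ht : 0 ≤ t) (h₀ σ : ℝ) :
    sinh (shrinkParam t h₀ σ) = sinh σ / stretch t (htOf h₀ σ) := by
  have := stretch_pos t (htOf h₀ σ)
  have := stretch_pos t h₀
  rw [shrinkParam, sinh_artanh (tanh_div_stretch_mem_Ioo ht h₀ σ),
    sqrt_one_sub_sq_tanh_div_stretch ht, tanh_eq_sinh_div_cosh]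
  field_simp

lemma Pt_ftOf_shrink_htOf (ht : 0 ≤ t) (h₀ σ : ℝ) :
    Pt (ftOf h₀ σ) (shrink t (htOf h₀ σ)) = U (shrink t h₀) (shrinkParam t h₀ σ) := by
  have hU := Pt_ftOf_htOf h₀ σ
  have := stretch_pos t (htOf h₀ σ)
  have := stretch_pos t h₀
  simp only [Pt, U, Prod.mk.injEq] at hU ⊢
  rw [cosh_shrink, sinh_shrink ht, cosh_shrink, sinh_shrink ht, cosh_shrinkParam ht,
    sinh_shrinkParam ht]
  field_simp
  exact ⟨hU.1, (mul_comm _ _).trans hU.2.1, hU.2.2⟩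

lemma lPrime_eq (ht : 0 ≤ t) (h₀ σ₁ σ₂ : ℝ) :
    lPrime t h₀ σ₁ σ₂ = |shrinkParam t h₀ σ₁ - shrinkParam t h₀ σ₂| := by
  rw [lPrime, Pt_ftOf_shrink_htOf ht, Pt_ftOf_shrink_htOf ht, hdist_U_U]

noncomputable def localRat (t h₀ σ : ℝ) : ℝ := stretch t (htOf h₀ σ) ^ 2 / stretch t h₀

lemma localRat_pos (t h₀ σ : ℝ) : 0 < localRat t h₀ σ :=
  div_pos (pow_pos (stretch_pos t _) 2) (stretch_pos t h₀)

lemma hasDerivAt_shrinkParam (ht : 0 ≤ t) (h₀ σ : ℝ) :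
    HasDerivAt (shrinkParam t h₀) (localRat t h₀ σ)⁻¹ σ := by
  have h := (hasDerivAt_artanh (tanh_div_stretch_mem_Ioo ht h₀ σ)).comp σ
    ((hasDerivAt_tanh σ).div_const (stretch t h₀))
  refine h.congr_deriv ?_
  have := stretch_pos t (htOf h₀ σ)
  have := stretch_pos t h₀
  rw [one_sub_sq_tanh_div_stretch ht, localRat]
  field_simp

lemma rat_eq_inv_abs_slope (ht : 0 ≤ t) (h₀ σ₁ σ₂ : ℝ) :
    rat t h₀ σ₁ σ₂ = |slope (shrinkParam t h₀) σ₁ σ₂|⁻¹ := by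
  rw [rat, lPrime_eq ht, slope_def_field, abs_div, inv_div, abs_sub_comm σ₂,
    abs_sub_comm (shrinkParam t h₀ σ₂)]

lemma exists_rat_eq_localRat (ht : 0 ≤ t) (h₀ : ℝ) {σ₁ σ₂ : ℝ} (hne : σ₁ ≠ σ₂) :
    ∃ c ∈ uIcc σ₁ σ₂, rat t h₀ σ₁ σ₂ = localRat t h₀ c := by
  wlog hlt : σ₁ < σ₂ generalizing σ₁ σ₂
  · obtain ⟨c, hc, hrat⟩ := this hne.symm (hne.lt_or_gt.resolve_left hlt)
    refine ⟨c, uIcc_comm σ₁ σ₂ ▸ hc, ?_⟩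
    rwa [rat_eq_inv_abs_slope ht, slope_comm, ← rat_eq_inv_abs_slope ht]
  obtain ⟨c, hc, hslope⟩ := exists_hasDerivAt_eq_slope (shrinkParam t h₀)
    (fun x => (localRat t h₀ x)⁻¹) hlt
    (fun x _ => (hasDerivAt_shrinkParam ht h₀ x).continuousAt.continuousWithinAt)
    (fun x _ => hasDerivAt_shrinkParam ht h₀ x)
  refine ⟨c, Icc_subset_uIcc (Ioo_subset_Icc_self hc), ?_⟩
  rw [rat_eq_inv_abs_slope ht, slope_def_field, ← hslope, abs_inv, inv_inv,
    abs_of_pos (localRat_pos t h₀ c)]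

lemma tendsto_rat_localRat (ht : 0 ≤ t) (h₀ σ : ℝ) :
    Tendsto (rat t h₀ σ) (𝓝[≠] σ) (𝓝 (localRat t h₀ σ)) := by
  have h := (hasDerivAt_iff_tendsto_slope.1 (hasDerivAt_shrinkParam ht h₀ σ)).abs.inv₀
    (abs_ne_zero.2 (inv_ne_zero (localRat_pos t h₀ σ).ne'))
  rw [abs_inv, inv_inv, abs_of_pos (localRat_pos t h₀ σ)] at h
  rwa [show rat t h₀ σ = _ from funext (rat_eq_inv_abs_slope ht h₀ σ)]

lemma one_le_localRat (ht : 0 ≤ t) (h₀ σ : ℝ) : 1 ≤ localRat t h₀ σ := by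
  rw [localRat, one_le_div (stretch_pos t h₀)]
  calc stretch t h₀ ≤ stretch t (htOf h₀ σ) := stretch_le_stretch_htOf ht h₀ σ
    _ ≤ stretch t (htOf h₀ σ) ^ 2 := le_self_pow₀ (one_le_stretch ht _) two_ne_zero

lemma localRat_le (ht : 0 ≤ t) {h₀ σ M : ℝ} (hh₀ : 0 ≤ h₀) (hM : htOf h₀ σ ≤ M) :
    localRat t h₀ σ ≤ 1 + (1 - exp (-t) ^ 2) * sinh M ^ 2 := by
  have := one_sub_exp_neg_sq_nonneg ht
  calc localRat t h₀ σ ≤ stretch t (htOf h₀ σ) ^ 2 :=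
        div_le_self (sq_nonneg _) (one_le_stretch ht h₀)
    _ = 1 + (1 - exp (-t) ^ 2) * sinh (htOf h₀ σ) ^ 2 := stretch_sq ht _
    _ ≤ 1 + (1 - exp (-t) ^ 2) * sinh M ^ 2 := by
        gcongr 1 + _ * ?_
        exact pow_le_pow_left₀ (sinh_nonneg_iff.2 (htOf_nonneg hh₀ σ)) (sinh_le_sinh.2 hM) 2

end Homothety

theorem trapezoid_homothety_ratio_general (m M : ℝ) (hm : 0 < m) :
    (∀ ε > 0, ∃ δ > 0, ∀ t, 0 < t → t < δ → ∀ h₀ σ₁ σ₂ : ℝ,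
      m ≤ h₀ → htOf h₀ σ₁ ≤ M → htOf h₀ σ₂ ≤ M → σ₁ ≠ σ₂ →
      |rat t h₀ σ₁ σ₂ - 1| < ε) ∧
    (∀ t > (0 : ℝ), ∀ h₀ σ₁ : ℝ, m ≤ h₀ → htOf h₀ σ₁ ≤ M →
      Filter.Tendsto (fun σ₂ => rat t h₀ σ₁ σ₂) (nhdsWithin σ₁ {σ₁}ᶜ)
        (nhds (Real.cosh (htOf h₀ σ₁) ^ 2 * Real.cosh (shrink t h₀) /
          (Real.cosh (shrink t (htOf h₀ σ₁)) ^ 2 * Real.cosh h₀)))) := by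
  refine ⟨fun ε hε => ?_, fun t ht h₀ σ₁ _ _ => ?_⟩
  · refine ⟨ε / (2 * sinh M ^ 2 + 1), by positivity,
      fun t ht htδ h₀ σ₁ σ₂ hmh hM₁ hM₂ hne => ?_⟩
    have hh₀ : 0 ≤ h₀ := hm.le.trans hmh
    obtain ⟨c, hc, hrat⟩ := exists_rat_eq_localRat ht.le h₀ hne
    have hcM : htOf h₀ c ≤ M := (htOf_le_max_of_mem_uIcc hh₀ hc).trans (max_le hM₁ hM₂)
    rw [hrat, abs_of_nonneg (sub_nonneg.2 (one_le_localRat ht.le h₀ c))]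
    calc localRat t h₀ c - 1 ≤ (1 - exp (-t) ^ 2) * sinh M ^ 2 := by
          linarith [localRat_le ht.le hh₀ hcM]
      _ ≤ 2 * t * sinh M ^ 2 := by gcongr; exact one_sub_exp_neg_sq_le
      _ ≤ t * (2 * sinh M ^ 2 + 1) := by nlinarith
      _ < ε := (lt_div_iff₀ (by positivity)).1 htδ
  · convert tendsto_rat_localRat ht.le h₀ σ₁ using 2
    have := cosh_pos (shrink t h₀)
    have := cosh_pos (shrink t (htOf h₀ σ₁))
    rw [localRat, stretch, stretch]
    field_simp

/-- Consider pairs of ultraparallel trapezoids `A₁A₂B₁B₂`, `A₁'A₂'B₁B₂` over the same lower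
edge, with `tanh hᵢ' = e^{-t} tanh hᵢ`; `h₀` is the distance between the lines `A₁A₂` and
`B₁B₂`, and `h₀ ≥ m`, `h₁, h₂ ≤ M` for fixed `0 < m < M`.  Then as `t → 0` the ratio
`l₁₂ / l₁₂'` tends to `1` uniformly over all such pairs; moreover for fixed `t` the ratio
extends continuously to the degenerate trapezoids `a₁₂ → 0`, with limit
`cosh²h₁ · cosh h₀' / (cosh²h₁' · cosh h₀)`. -/
theorem trapezoid_homothety_ratio (m M : ℝ) (hm : 0 < m) (hmM : m < M) :
    (∀ ε > 0, ∃ δ > 0, ∀ t, 0 < t → t < δ → ∀ h₀ σ₁ σ₂ : ℝ,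
      m ≤ h₀ → htOf h₀ σ₁ ≤ M → htOf h₀ σ₂ ≤ M → σ₁ ≠ σ₂ →
      |rat t h₀ σ₁ σ₂ - 1| < ε) ∧
    (∀ t > (0 : ℝ), ∀ h₀ σ₁ : ℝ, m ≤ h₀ → htOf h₀ σ₁ ≤ M →
      Filter.Tendsto (fun σ₂ => rat t h₀ σ₁ σ₂) (nhdsWithin σ₁ {σ₁}ᶜ)
        (nhds (Real.cosh (htOf h₀ σ₁) ^ 2 * Real.cosh (shrink t h₀) /
          (Real.cosh (shrink t (htOf h₀ σ₁)) ^ 2 * Real.cosh h₀)))) :=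
  trapezoid_homothety_ratio_general m M hm
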